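/- Let 0 < L < ∞, let f : ℝ^d → ℝ be convex and differentiable with L-Lipschitz gradient, let x_* be a global minimizer of f, and let x_0 ∈ ℝ^d satisfy ‖x_0 − x_*‖ ≤ R. Then the point x_1 = x_0 − (3/(2L)) ∇f(x_0) obtained by a single gradient step with step size 3/(2L) satisfies f(x_1) − f(x_*) ≤ L R² / 8. -/

import Mathlib

/-!
For an `L`-smooth convex `f` the interpolation inequality
`f y + ⟪∇f y, x - y⟫ + ‖∇f x - ∇f y‖² / (2L) ≤ f x` holds: it is the descent lemma applied to
`f - ⟪∇f y, ·⟫`, which by convexity is minimized at `y`. Summing it over the pairs `(x₀, x₁)`,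
`(x⋆, x₀)`, `(x⋆, x₁)` with unit weights, the step `3/(2L)` makes the gradient terms collapse to
`2 (f x₁ - f x⋆) ≤ ⟪g₀ + g₁, x₀ - x⋆⟫ - ‖g₀ + g₁‖² / L`, and maximizing the right-hand side over
`g₀ + g₁` leaves `L ‖x₀ - x⋆‖² / 4`.
-/

open scoped RealInnerProductSpace
open AffineMap

section SmoothConvex

variable {F : Type*} [NormedAddCommGroup F] [InnerProductSpace ℝ F]

theorem inner_sub_norm_sq_div_le {L : ℝ} (hL : 0 < L) (s v : F) :
    ⟪s, v⟫ - ‖s‖ ^ 2 / L ≤ L / 4 * ‖v‖ ^ 2 := by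
  have hsq : ‖s - (L / 2) • v‖ ^ 2 = ‖s‖ ^ 2 - L * ⟪s, v⟫ + L ^ 2 / 4 * ‖v‖ ^ 2 := by
    rw [norm_sub_sq_real, real_inner_smul_right, norm_smul, Real.norm_of_nonneg (by positivity)]
    ring
  calc ⟪s, v⟫ - ‖s‖ ^ 2 / L = L / 4 * ‖v‖ ^ 2 - ‖s - (L / 2) • v‖ ^ 2 / L := by
        rw [hsq]
        field_simp
        ring
    _ ≤ L / 4 * ‖v‖ ^ 2 := sub_le_self _ (by positivity)

variable [CompleteSpace F] {f : F → ℝ}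

theorem HasGradientAt.hasDerivAt_comp_lineMap {g x y : F} {t : ℝ}
    (hf : HasGradientAt f g (lineMap (k := ℝ) x y t)) :
    HasDerivAt (fun s : ℝ => f (lineMap x y s)) ⟪g, y - x⟫ t :=
  (hasGradientAt_iff_hasFDerivAt.mp hf).comp_hasDerivAt t hasDerivAt_lineMap

theorem ConvexOn.add_inner_le_of_hasGradientAt (hf : ConvexOn ℝ Set.univ f) {g x : F}
    (hg : HasGradientAt f g x) (y : F) :
    f x + ⟪g, y - x⟫ ≤ f y := by
  have hline : ConvexOn ℝ Set.univ (f ∘ lineMap (k := ℝ) x y) := by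
    simpa using hf.comp_affineMap (lineMap x y : ℝ →ᵃ[ℝ] F)
  have hderiv : HasDerivAt (f ∘ lineMap (k := ℝ) x y) ⟪g, y - x⟫ 0 :=
    HasGradientAt.hasDerivAt_comp_lineMap (by rwa [lineMap_apply_zero])
  have hslope := hline.le_slope_of_hasDerivAt trivial trivial one_pos hderiv
  simp only [slope_def_field, Function.comp_apply, lineMap_apply_zero, lineMap_apply_one,
    sub_zero, div_one] at hslope
  linarith

theorem le_add_inner_add_norm_sq_of_lipschitz_gradient {g : F → F} {L : ℝ}
    (hg : ∀ z, HasGradientAt f (g z) z) (hlip : ∀ x y, ‖g x - g y‖ ≤ L * ‖x - y‖) (x y : F) :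
    f y ≤ f x + ⟪g x, y - x⟫ + L / 2 * ‖y - x‖ ^ 2 := by
  set ψ : ℝ → ℝ := fun t => f (lineMap x y t) - t * ⟪g x, y - x⟫ - L / 2 * t ^ 2 * ‖y - x‖ ^ 2
  have hψ : ∀ t, HasDerivAt ψ (⟪g (lineMap x y t) - g x, y - x⟫ - L * t * ‖y - x‖ ^ 2) t := by
    intro t
    refine (((hg _).hasDerivAt_comp_lineMap.sub ((hasDerivAt_id t).mul_const _)).sub
      (((hasDerivAt_pow 2 t).const_mul (L / 2)).mul_const _)).congr_deriv ?_
    rw [inner_sub_left]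
    push_cast
    ring
  have hψ_anti : AntitoneOn ψ (Set.Ici 0) := by
    refine antitoneOn_of_hasDerivWithinAt_nonpos (convex_Ici 0)
      (fun t _ => (hψ t).continuousAt.continuousWithinAt) (fun t _ => (hψ t).hasDerivWithinAt) ?_
    intro t ht
    rw [interior_Ici] at ht
    have hdist : ‖lineMap x y t - x‖ = t * ‖y - x‖ := by
      rw [← vsub_eq_sub, lineMap_vsub_left, norm_smul, Real.norm_of_nonneg ht.le,
        vsub_eq_sub]
    have := (real_inner_le_norm _ _).trans
      (mul_le_mul_of_nonneg_right ((hlip (lineMap x y t) x).trans_eq (by rw [hdist]))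
        (norm_nonneg (y - x)))
    linarith
  have h01 := hψ_anti (Set.mem_Ici.mpr le_rfl) (zero_le_one' ℝ) zero_le_one
  simp only [ψ, lineMap_apply_zero, lineMap_apply_one] at h01
  linarith

theorem add_norm_sq_div_le_of_lipschitz_gradient {g : F → F} {L : ℝ} (hL : 0 < L)
    (hg : ∀ z, HasGradientAt f (g z) z) (hlip : ∀ x y, ‖g x - g y‖ ≤ L * ‖x - y‖)
    {m : F} (hmin : ∀ z, f m ≤ f z) (x : F) :
    f m + ‖g x‖ ^ 2 / (2 * L) ≤ f x := by
  have hstep := le_add_inner_add_norm_sq_of_lipschitz_gradient hg hlip x (x - L⁻¹ • g x)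
  rw [sub_sub_cancel_left, inner_neg_right, real_inner_smul_right, real_inner_self_eq_norm_sq,
    norm_neg, norm_smul, Real.norm_of_nonneg (inv_nonneg.mpr hL.le)] at hstep
  have hsimp : L⁻¹ * ‖g x‖ ^ 2 - L / 2 * (L⁻¹ * ‖g x‖) ^ 2 = ‖g x‖ ^ 2 / (2 * L) := by
    field_simp
    ring
  linarith [hmin (x - L⁻¹ • g x)]

theorem ConvexOn.interpolation_of_lipschitz_gradient (hf : ConvexOn ℝ Set.univ f) {g : F → F}
    {L : ℝ} (hL : 0 < L) (hg : ∀ z, HasGradientAt f (g z) z)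
    (hlip : ∀ x y, ‖g x - g y‖ ≤ L * ‖x - y‖) (x y : F) :
    f y + ⟪g y, x - y⟫ + ‖g x - g y‖ ^ 2 / (2 * L) ≤ f x := by
  have hgφ : ∀ z, HasGradientAt (fun w => f w - ⟪g y, w⟫) (g z - g y) z := fun z => by
    rw [hasGradientAt_iff_hasFDerivAt, map_sub]
    exact (hasGradientAt_iff_hasFDerivAt.mp (hg z)).sub
      (InnerProductSpace.toDual ℝ F (g y)).hasFDerivAt
  have hlipφ : ∀ a b, ‖(g a - g y) - (g b - g y)‖ ≤ L * ‖a - b‖ := fun a b => by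
    simpa using hlip a b
  have hminφ : ∀ z, f y - ⟪g y, y⟫ ≤ f z - ⟪g y, z⟫ := fun z => by
    linarith [hf.add_inner_le_of_hasGradientAt (hg y) z, inner_sub_right (𝕜 := ℝ) (g y) z y]
  have := add_norm_sq_div_le_of_lipschitz_gradient hL hgφ hlipφ hminφ x
  linarith [inner_sub_right (𝕜 := ℝ) (g y) x y]

theorem two_mul_sub_le_of_gradient_step (hf : ConvexOn ℝ Set.univ f) {g : F → F}
    {L : ℝ} (hL : 0 < L) (hg : ∀ z, HasGradientAt f (g z) z)
    (hlip : ∀ x y, ‖g x - g y‖ ≤ L * ‖x - y‖) {xstar : F} (hgstar : g xstar = 0) (x₀ : F) :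
    let x₁ := x₀ - (3 / (2 * L)) • g x₀
    2 * (f x₁ - f xstar) ≤ ⟪g x₀ + g x₁, x₀ - xstar⟫ - ‖g x₀ + g x₁‖ ^ 2 / L := by
  intro x₁
  have i₁ := hf.interpolation_of_lipschitz_gradient hL hg hlip x₀ x₁
  have i₂ := hf.interpolation_of_lipschitz_gradient hL hg hlip xstar x₀
  have i₃ := hf.interpolation_of_lipschitz_gradient hL hg hlip xstar x₁
  rw [hgstar, zero_sub, norm_neg] at i₂ i₃
  have e₁ : ⟪g x₁, x₀ - x₁⟫ = 3 / (2 * L) * ⟪g x₀, g x₁⟫ := by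
    rw [sub_sub_cancel, real_inner_smul_right, real_inner_comm]
  have e₃ : ⟪g x₁, xstar - x₁⟫ = ⟪g x₁, xstar - x₀⟫ + 3 / (2 * L) * ⟪g x₀, g x₁⟫ := by
    rw [← e₁, ← inner_add_right, sub_add_sub_cancel]
  rw [e₁, norm_sub_sq_real] at i₁
  rw [e₃] at i₃
  rw [norm_add_sq_real, ← neg_sub xstar x₀, inner_neg_right, inner_add_left]
  linear_combination i₁ + i₂ + i₃

end SmoothConvex

/-- The 'simple example' of Section 3 of the paper: one gradient step with step size
`3/(2L)` on an `L`-smooth convex function started within distance `R` of a minimizer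
satisfies `f(x₁) - f(x⋆) ≤ L R² / 8`. -/
theorem one_step_gradient_bound {d : ℕ} (L R : ℝ) (hL : 0 < L)
    (f : EuclideanSpace ℝ (Fin d) → ℝ)
    (hcvx : ConvexOn ℝ Set.univ f)
    (hdiff : Differentiable ℝ f)
    (hlip : ∀ x y, ‖gradient f x - gradient f y‖ ≤ L * ‖x - y‖)
    (xstar x₀ : EuclideanSpace ℝ (Fin d))
    (hmin : ∀ y, f xstar ≤ f y)
    (hR : ‖x₀ - xstar‖ ≤ R) :
    f (x₀ - (3 / (2 * L)) • gradient f x₀) - f xstar ≤ L * R ^ 2 / 8 := by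
  have hg : ∀ z, HasGradientAt f (gradient f z) z := fun z => (hdiff z).hasGradientAt
  have hgstar : gradient f xstar = 0 := by
    have hlocal : IsLocalMin f xstar := Filter.Eventually.of_forall hmin
    simp [gradient, hlocal.fderiv_eq_zero]
  have hcert := two_mul_sub_le_of_gradient_step hcvx hL hg hlip hgstar x₀
  have hquad := inner_sub_norm_sq_div_le hL
    (gradient f x₀ + gradient f (x₀ - (3 / (2 * L)) • gradient f x₀)) (x₀ - xstar)
  have hR2 : ‖x₀ - xstar‖ ^ 2 ≤ R ^ 2 := pow_le_pow_left₀ (norm_nonneg _) hR 2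
  linarith [mul_le_mul_of_nonneg_left hR2 hL.le]
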